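/- Let p and p̃ be probability densities on ℝ with continuous, strictly increasing cdfs F and F̃. If the rank statistic A_K (of an independent p-sample among K i.i.d. p̃-samples) is uniform on {0,…,K} for every K ∈ ℕ, then F = F̃, and hence p = p̃ almost everywhere. -/

import Mathlib

/-!
The event `A_K = K` is "the `μ`-sample exceeds all `K` independent `ν`-samples", whose probability
is `∫ F̃(y)^K dμ(y)`. Uniformity thus says that `F̃_* μ`, a measure on `[0, 1]`, has the moments
`1 / (n + 1)` of the uniform distribution. Measures on a compact interval are determined by their
moments (Weierstrass approximation), so `F̃(Y)` is uniform for `Y ∼ μ`, and since `F̃` is strictly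
increasing, `μ(-∞, y] = P(F̃(Y) ≤ F̃(y)) = F̃(y)`.
-/

open MeasureTheory ProbabilityTheory Set

lemma measure_singleton_eq_zero_of_continuousAt_cdf {ν : Measure ℝ} [IsProbabilityMeasure ν]
    {y : ℝ} (h : ContinuousAt (cdf ν) y) : ν {y} = 0 := by
  rw [← measure_cdf ν, StieltjesFunction.measure_singleton, h.continuousWithinAt.leftLim_eq,
    sub_self, ENNReal.ofReal_zero]

lemma measure_Iio_eq_ofReal_cdf {ν : Measure ℝ} [IsProbabilityMeasure ν]
    {y : ℝ} (h : ContinuousAt (cdf ν) y) : ν (Iio y) = ENNReal.ofReal (cdf ν y) := by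
  rw [← Iic_sdiff_right, measure_sdiff_null (measure_singleton_eq_zero_of_continuousAt_cdf h),
    ofReal_cdf]

section MomentDeterminacy

variable {μ ν : Measure ℝ} [IsFiniteMeasureOnCompacts μ] [IsFiniteMeasureOnCompacts ν] {a b : ℝ}

lemma setIntegral_Icc_eval_eq_of_integral_pow_eq
    (h : ∀ n : ℕ, ∫ x in Icc a b, x ^ n ∂μ = ∫ x in Icc a b, x ^ n ∂ν) (p : Polynomial ℝ) :
    ∫ x in Icc a b, p.eval x ∂μ = ∫ x in Icc a b, p.eval x ∂ν := by
  induction p using Polynomial.induction_on' with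
  | add p q hp hq =>
    simp only [Polynomial.eval_add]
    rw [integral_add p.continuous.integrableOn_Icc q.continuous.integrableOn_Icc,
      integral_add p.continuous.integrableOn_Icc q.continuous.integrableOn_Icc, hp, hq]
  | monomial n c =>
    simp only [Polynomial.eval_monomial]
    rw [integral_const_mul, integral_const_mul, h n]

lemma setIntegral_Icc_eq_of_integral_pow_eq
    (h : ∀ n : ℕ, ∫ x in Icc a b, x ^ n ∂μ = ∫ x in Icc a b, x ^ n ∂ν)
    {g : ℝ → ℝ} (hg : ContinuousOn g (Icc a b)) :
    ∫ x in Icc a b, g x ∂μ = ∫ x in Icc a b, g x ∂ν := by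
  refine eq_of_forall_dist_le fun ε hε => ?_
  set M := μ.real (Icc a b) + ν.real (Icc a b) + 1
  have hM : 0 < M := by positivity
  obtain ⟨p, hp⟩ := exists_polynomial_near_of_continuousOn a b g hg (ε / M) (by positivity)
  have approx : ∀ (m : Measure ℝ) [IsFiniteMeasureOnCompacts m],
      dist (∫ x in Icc a b, g x ∂m) (∫ x in Icc a b, p.eval x ∂m) ≤ ε / M * m.real (Icc a b) := by
    intro m _
    rw [dist_eq_norm, ← integral_sub (hg.integrableOn_compact isCompact_Icc)
      p.continuous.integrableOn_Icc]
    refine norm_setIntegral_le_of_norm_le_const isCompact_Icc.measure_lt_top fun x hx => ?_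
    rw [norm_sub_rev]
    exact (hp x hx).le
  calc dist (∫ x in Icc a b, g x ∂μ) (∫ x in Icc a b, g x ∂ν)
      ≤ dist (∫ x in Icc a b, g x ∂μ) (∫ x in Icc a b, p.eval x ∂μ)
        + dist (∫ x in Icc a b, g x ∂ν) (∫ x in Icc a b, p.eval x ∂ν) := by
        rw [setIntegral_Icc_eval_eq_of_integral_pow_eq h p]
        exact dist_triangle_right _ _ _
    _ ≤ ε / M * μ.real (Icc a b) + ε / M * ν.real (Icc a b) := add_le_add (approx μ) (approx ν)
    _ ≤ ε / M * M := by rw [← mul_add]; gcongr; linarith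
    _ = ε := div_mul_cancel₀ ε hM.ne'

lemma restrict_Icc_eq_of_integral_pow_eq
    (h : ∀ n : ℕ, ∫ x in Icc a b, x ^ n ∂μ = ∫ x in Icc a b, x ^ n ∂ν) :
    μ.restrict (Icc a b) = ν.restrict (Icc a b) := by
  have : IsFiniteMeasure (μ.restrict (Icc a b)) :=
    isFiniteMeasure_restrict.mpr isCompact_Icc.measure_lt_top.ne
  have : IsFiniteMeasure (ν.restrict (Icc a b)) :=
    isFiniteMeasure_restrict.mpr isCompact_Icc.measure_lt_top.ne
  exact ext_of_forall_integral_eq_of_IsFiniteMeasure fun f =>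
    setIntegral_Icc_eq_of_integral_pow_eq h f.continuous.continuousOn

end MomentDeterminacy

lemma eq_restrict_Icc_of_integral_pow_eq_inv_succ {η : Measure ℝ} [IsFiniteMeasure η]
    (hη : ∀ᵐ x ∂η, x ∈ Icc (0 : ℝ) 1) (h : ∀ n : ℕ, ∫ x, x ^ n ∂η = 1 / (n + 1)) :
    η = volume.restrict (Icc 0 1) := by
  have hres : η.restrict (Icc 0 1) = η := Measure.restrict_eq_self_of_ae_mem hη
  rw [← hres, restrict_Icc_eq_of_integral_pow_eq (μ := η) (ν := volume) fun n => ?_]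
  rw [hres, h n, integral_Icc_eq_integral_Ioc, ← intervalIntegral.integral_of_le zero_le_one,
    integral_pow]
  norm_num

lemma Finset.card_filter_univ_eq_iff_forall {K : ℕ} (p : Fin K → Prop) [DecidablePred p] :
    (Finset.univ.filter p).card = K ↔ ∀ i, p i := by
  simpa using Finset.card_filter_eq_iff (s := Finset.univ) (p := p)

lemma MeasureTheory.Measure.pi_setOf_forall_castSucc_lt_last {K : ℕ}
    (L : Fin (K + 1) → Measure ℝ) [∀ i, SigmaFinite (L i)] :
    Measure.pi L {f | ∀ i : Fin K, f i.castSucc < f (Fin.last K)}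
      = ∫⁻ y, ∏ i : Fin K, L i.castSucc (Iio y) ∂L (Fin.last K) := by
  set S : Set (ℝ × (Fin K → ℝ)) := {q | ∀ i, q.2 i < q.1}
  have hS : MeasurableSet S := by
    simp only [S, ofPred_forall]
    exact .iInter fun i => measurableSet_lt (by fun_prop) (by fun_prop)
  have hpre : MeasurableEquiv.piFinSuccAbove (fun _ => ℝ) (Fin.last K) ⁻¹' S
      = {f | ∀ i : Fin K, f i.castSucc < f (Fin.last K)} := by
    ext f
    simp [S, MeasurableEquiv.piFinSuccAbove, Fin.init]
  rw [← hpre, (measurePreserving_piFinSuccAbove L (Fin.last K)).measure_preimage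
    hS.nullMeasurableSet, Measure.prod_apply hS]
  refine lintegral_congr fun y => ?_
  have hsec : Prod.mk y ⁻¹' S = Set.pi univ fun _ => Iio y := by
    ext x; simp [S]
  simp only [hsec, Measure.pi_pi, Fin.succAbove_last]

lemma measure_forall_castSucc_lt_last {Ω : Type*} [MeasurableSpace Ω] {P : Measure Ω}
    [IsProbabilityMeasure P] {K : ℕ} {X : Fin (K + 1) → Ω → ℝ} (hX : ∀ i, Measurable (X i))
    (hindep : iIndepFun X P) :
    P {ω | ∀ i : Fin K, X i.castSucc ω < X (Fin.last K) ω}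
      = ∫⁻ y, ∏ i : Fin K, P.map (X i.castSucc) (Iio y) ∂P.map (X (Fin.last K)) := by
  have hvec : Measurable fun ω i => X i ω := measurable_pi_iff.mpr hX
  have hS : MeasurableSet {f : Fin (K + 1) → ℝ | ∀ i : Fin K, f i.castSucc < f (Fin.last K)} := by
    simp only [ofPred_forall]
    exact .iInter fun i => measurableSet_lt (measurable_pi_apply _) (measurable_pi_apply _)
  have : ∀ i, IsProbabilityMeasure (P.map (X i)) :=
    fun i => Measure.isProbabilityMeasure_map (hX i).aemeasurable
  rw [← Measure.pi_setOf_forall_castSucc_lt_last fun i => P.map (X i), ← hindep.map_fun_eq_pi_map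
    fun i => (hX i).aemeasurable, Measure.map_apply hvec hS]
  rfl

lemma measure_Iic_eq_of_map_eq_uniform {μ : Measure ℝ} {G : ℝ → ℝ} (hG : StrictMono G)
    (hGmeas : Measurable G) (hG01 : ∀ y, G y ∈ Icc 0 1)
    (hmap : μ.map G = volume.restrict (Icc 0 1)) (y : ℝ) :
    μ (Iic y) = ENNReal.ofReal (G y) := by
  have hpre : Iic y = G ⁻¹' Iic (G y) := by
    ext x; simp [hG.le_iff_le]
  have hcut : Iic (G y) ∩ Icc 0 1 = Icc 0 (G y) := by
    ext x
    simp only [mem_inter_iff, mem_Iic, mem_Icc]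
    constructor
    · rintro ⟨hxy, hx0, -⟩; exact ⟨hx0, hxy⟩
    · rintro ⟨hx0, hxy⟩; exact ⟨hxy, hx0, hxy.trans (hG01 y).2⟩
  rw [hpre, ← Measure.map_apply hGmeas measurableSet_Iic, hmap,
    Measure.restrict_apply measurableSet_Iic, hcut, Real.volume_Icc, sub_zero]

theorem uniform_rank_all_K_implies_eq_general
    {Ω : Type*} [MeasurableSpace Ω] (P : Measure Ω) [IsProbabilityMeasure P]
    (μ ν : Measure ℝ) [IsProbabilityMeasure μ] [IsProbabilityMeasure ν]
    (hF'cont : Continuous (cdf ν)) (hF'mono : StrictMono (cdf ν))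
    (X : (K : ℕ) → Fin (K + 1) → Ω → ℝ)
    (hmeas : ∀ K i, Measurable (X K i))
    (hindep : ∀ K, iIndepFun (X K) P)
    (hlawν : ∀ K, ∀ i : Fin K, Measure.map (X K i.castSucc) P = ν)
    (hlawμ : ∀ K, Measure.map (X K (Fin.last K)) P = μ)
    (huniform : ∀ K, ∀ n : ℕ, n ≤ K →
      P {ω | (Finset.univ.filter
          (fun i : Fin K => X K i.castSucc ω < X K (Fin.last K) ω)).card = n}
        = 1 / (K + 1)) :
    (∀ y, cdf μ y = cdf ν y) ∧ μ = ν := by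
  have hFmeas : Measurable (cdf ν) := hF'cont.measurable
  have hmoment : ∀ K : ℕ, ∫ y, cdf ν y ^ K ∂μ = 1 / (K + 1) := by
    intro K
    have hall : P {ω | ∀ i : Fin K, X K i.castSucc ω < X K (Fin.last K) ω} = 1 / (K + 1) := by
      simpa only [Finset.card_filter_univ_eq_iff_forall] using huniform K K le_rfl
    simp only [measure_forall_castSucc_lt_last (hmeas K) (hindep K), hlawμ K, hlawν K,
      measure_Iio_eq_ofReal_cdf hF'cont.continuousAt, Finset.prod_const, Finset.card_univ,
      Fintype.card_fin, ← ENNReal.ofReal_pow (cdf_nonneg ν _)] at hall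
    rw [integral_eq_lintegral_of_nonneg_ae (.of_forall fun y => pow_nonneg (cdf_nonneg ν y) K)
      (hF'cont.pow K).aestronglyMeasurable, hall, ENNReal.toReal_div,
      ENNReal.toReal_add (ENNReal.natCast_ne_top K) ENNReal.one_ne_top]
    simp
  have huni : μ.map (cdf ν) = volume.restrict (Icc 0 1) := by
    refine eq_restrict_Icc_of_integral_pow_eq_inv_succ
      ((ae_map_iff hFmeas.aemeasurable measurableSet_Icc).mpr
        (.of_forall fun y => ⟨cdf_nonneg ν y, cdf_le_one ν y⟩)) fun n => ?_
    rw [integral_map hFmeas.aemeasurable (continuous_pow n).aestronglyMeasurable, hmoment n]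
  have hμν : μ = ν := Measure.ext_of_Iic μ ν fun y => by
    rw [measure_Iic_eq_of_map_eq_uniform hF'mono hFmeas
      (fun y => ⟨cdf_nonneg ν y, cdf_le_one ν y⟩) huni y, ofReal_cdf]
  exact ⟨fun y => by rw [hμν], hμν⟩

/-- **Converse theorem.** Let `μ` (density `p`) and `ν` (density `p̃`) be probability measures
on `ℝ` with continuous strictly increasing cdfs `F` and `F̃`.  If for every `K` the rank
statistic `A_K` of an independent `μ`-sample among `K` i.i.d. `ν`-samples is uniform on
`{0, …, K}`, then `F = F̃`, and hence the distributions coincide (`p = p̃` a.e.). -/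
theorem uniform_rank_all_K_implies_eq
    {Ω : Type*} [MeasurableSpace Ω] (P : Measure Ω) [IsProbabilityMeasure P]
    (μ ν : Measure ℝ) [IsProbabilityMeasure μ] [IsProbabilityMeasure ν]
    (hFcont : Continuous (cdf μ)) (hFmono : StrictMono (cdf μ))
    (hF'cont : Continuous (cdf ν)) (hF'mono : StrictMono (cdf ν))
    (X : (K : ℕ) → Fin (K + 1) → Ω → ℝ)
    (hmeas : ∀ K i, Measurable (X K i))
    (hindep : ∀ K, iIndepFun (X K) P)
    (hlawν : ∀ K, ∀ i : Fin K, Measure.map (X K i.castSucc) P = ν)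
    (hlawμ : ∀ K, Measure.map (X K (Fin.last K)) P = μ)
    (huniform : ∀ K, ∀ n : ℕ, n ≤ K →
      P {ω | (Finset.univ.filter
          (fun i : Fin K => X K i.castSucc ω < X K (Fin.last K) ω)).card = n}
        = 1 / (K + 1)) :
    (∀ y, cdf μ y = cdf ν y) ∧ μ = ν :=
  uniform_rank_all_K_implies_eq_general P μ ν hF'cont hF'mono X hmeas hindep hlawν hlawμ huniform
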